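/- arXiv:2110.00285 — 2 statements merged into one kernel-verified Lean document; each statement's English description precedes it below -/
import Mathlib

section
/- Suppose A ∈ ℝ_max^{n×n} satisfies assumption (★). Let λ ∈ ℝ, let C be a λ-maximal multi-circuit in G(A), and let C' be any multi-circuit in G(A). Then W(A,λ,C') ⊆ W(A,λ,C). In particular, if C' is also λ-maximal, then W(A,λ,C) = W(A,λ,C'). -/
open Filter

noncomputable section

/-- The max-plus semiring ℝ_max = ℝ ∪ {ε}, with ε = ⊥ = −∞,
`a ⊕ b = max a b` and `a ⊗ b = a + b` (the `Add` of `WithBot ℝ`). -/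
abbrev RMax : Type := WithBot ℝ

/-- Max-plus vectors. -/
abbrev Vec (ι : Type) : Type := ι → RMax

/-- The max-plus zero vector ℰ. -/
def zeroV (ι : Type) : Vec ι := fun _ => (⊥ : RMax)

/-- Max-plus "negation" (inversion for ⊗), fixing ⊥. -/
def mpNeg (a : RMax) : RMax := WithBot.map (fun r : ℝ => -r) a

section Defs

variable {ι κ₁ κ₂ κ₃ : Type}

/-- Matrix (or vector) sum `M ⊕ N`, entrywise max. -/
def mpAddM (M N : Matrix κ₁ κ₂ RMax) : Matrix κ₁ κ₂ RMax := fun i j => max (M i j) (N i j)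

/-- Scalar multiplication `l ⊗ M` of a matrix. -/
def smulM (l : RMax) (M : Matrix κ₁ κ₂ RMax) : Matrix κ₁ κ₂ RMax := fun i j => l + M i j

/-- Scalar multiplication `l ⊗ x` of a vector. -/
def smulV (l : RMax) (x : Vec ι) : Vec ι := fun i => l + x i

/-- Max-plus matrix product `M ⊗ N`. -/
def mpMul [Fintype κ₂] (M : Matrix κ₁ κ₂ RMax) (N : Matrix κ₂ κ₃ RMax) : Matrix κ₁ κ₃ RMax :=
  fun i j => Finset.univ.sup fun k => M i k + N k j

/-- Max-plus matrix-vector product `M ⊗ x`. -/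
def mpMulVec [Fintype κ₂] (M : Matrix κ₁ κ₂ RMax) (x : Vec κ₂) : Vec κ₁ :=
  fun i => Finset.univ.sup fun j => M i j + x j

/-- The max-plus identity matrix `E_n` (0 on the diagonal, ε elsewhere). -/
def mpId [DecidableEq ι] : Matrix ι ι RMax := fun i j => if i = j then (0 : RMax) else ⊥

/-- Max-plus inverse of a generalized permutation matrix:
the transpose with the finite entries negated. -/
def genInv (P : Matrix ι ι RMax) : Matrix ι ι RMax := fun i j => mpNeg (P j i)

/-- The max-plus determinant `det A = ⊕_π ⊗_i a_{i π(i)}`. -/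
def mpDet [Fintype ι] [DecidableEq ι] (A : Matrix ι ι RMax) : RMax :=
  Finset.univ.sup fun π : Equiv.Perm ι => ∑ i, A i (π i)

/-- Max-plus matrix powers. -/
def mpPow [Fintype ι] [DecidableEq ι] (P : Matrix ι ι RMax) : ℕ → Matrix ι ι RMax
  | 0 => mpId
  | k + 1 => mpMul P (mpPow P k)

/-- The Kleene star `P* = E ⊕ P ⊕ P^{⊗2} ⊕ ⋯ ⊕ P^{⊗(n−1)}`. -/
def mpStar [Fintype ι] [DecidableEq ι] (P : Matrix ι ι RMax) : Matrix ι ι RMax :=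
  fun i j => (Finset.range (Fintype.card ι)).sup fun k => mpPow P k i j

/-- A multi-circuit on the vertex set `ι`: a union of vertex-disjoint elementary circuits,
encoded by its vertex set `verts` together with the successor permutation `perm`,
which is the identity outside `verts`.  Its edge set is `{(i, perm i) | i ∈ verts}`
and its length is `verts.card`. -/
structure MultiCircuit (ι : Type) where
  verts : Finset ι
  perm : Equiv.Perm ι
  fixes : ∀ i, i ∉ verts → perm i = i

/-- The weight `w(C)` of a multi-circuit with respect to the matrix `A`. -/
def mcWeight (A : Matrix ι ι RMax) (C : MultiCircuit ι) : RMax :=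
  ∑ i ∈ C.verts, A i (C.perm i)

/-- The multi-circuit `C` lies in the graph `G(A)` (all its edges have weight ≠ ε). -/
def InGraph (A : Matrix ι ι RMax) (C : MultiCircuit ι) : Prop :=
  ∀ i ∈ C.verts, A i (C.perm i) ≠ ⊥

/-- A multi-circuit consisting of a single (elementary) circuit. -/
def IsCircuit (C : MultiCircuit ι) : Prop :=
  C.verts.Nonempty ∧ ∀ i ∈ C.verts, ∀ j ∈ C.verts, C.perm.SameCycle i j

/-- `D` is a critical circuit of `G(A)`: an elementary circuit of `G(A)` whose average
weight is maximal among all elementary circuits of `G(A)`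
(averages `w/ℓ` are compared without division via `ℓ' • w ≥ ℓ • w'`). -/
def IsCritical (A : Matrix ι ι RMax) (D : MultiCircuit ι) : Prop :=
  IsCircuit D ∧ InGraph A D ∧
    ∀ D' : MultiCircuit ι, IsCircuit D' → InGraph A D' →
      D.verts.card • mcWeight A D' ≤ D'.verts.card • mcWeight A D

/-- `ρ` is the maximum average weight of the (elementary) circuits of `G(A)`,
taken to be ε if `G(A)` has no circuit. -/
def IsMaxCycleMean (A : Matrix ι ι RMax) (ρ : RMax) : Prop :=
  (∀ D : MultiCircuit ι, IsCircuit D → InGraph A D → mcWeight A D ≤ D.verts.card • ρ) ∧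
    ((∃ D : MultiCircuit ι, IsCircuit D ∧ InGraph A D ∧ mcWeight A D = D.verts.card • ρ) ∨
      (ρ = ⊥ ∧ ∀ D : MultiCircuit ι, IsCircuit D → ¬InGraph A D))

/-- `l` is a (geometric) eigenvalue of `A`: `A ⊗ x = l ⊗ x` for some `x ≠ ℰ`. -/
def IsEigen [Fintype ι] (A : Matrix ι ι RMax) (l : RMax) : Prop :=
  ∃ x : Vec ι, x ≠ zeroV ι ∧ mpMulVec A x = smulV l x

variable [Fintype ι] [DecidableEq ι]

/-- The value `w(C) ⊗ l^{⊗(n − ℓ(C))}` of the term of `χ_A(l)` corresponding to the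
multi-circuit `C`. -/
def ValAt (A : Matrix ι ι RMax) (C : MultiCircuit ι) (l : RMax) : RMax :=
  mcWeight A C + (Fintype.card ι - C.verts.card) • l

/-- `C` is `μ`-maximal (for a real `μ`): it attains
`χ_A(μ) = max_C (w(C) + (n − ℓ(C))·μ)`. -/
def MaximalAt (A : Matrix ι ι RMax) (C : MultiCircuit ι) (μ : ℝ) : Prop :=
  ∀ C' : MultiCircuit ι, ValAt A C' (μ : RMax) ≤ ValAt A C (μ : RMax)

/-- `C` is `l`-maximal, for `l ∈ ℝ_max`; for `l = ε` this means `μ`-maximal for all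
sufficiently small real `μ`. -/
def IsLamMax (A : Matrix ι ι RMax) (C : MultiCircuit ι) (l : RMax) : Prop :=
  (∀ μ : ℝ, l = (μ : RMax) → MaximalAt A C μ) ∧
    (l = ⊥ → ∃ μ₀ : ℝ, ∀ μ : ℝ, μ ≤ μ₀ → MaximalAt A C μ)

/-- `l` is an algebraic eigenvalue of `A`, i.e. a root of the characteristic polynomial
`χ_A(t)`: a real `l` is a root iff there are two `l`-maximal multi-circuits of different
lengths, and `ε` is a root iff `G(A)` contains no multi-circuit of length `n`. -/
def IsAlgEigen (A : Matrix ι ι RMax) (l : RMax) : Prop :=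
  (l ≠ ⊥ ∧ ∃ C C' : MultiCircuit ι, IsLamMax A C l ∧ IsLamMax A C' l ∧
      C.verts.card ≠ C'.verts.card) ∨
    (l = ⊥ ∧ ∀ C : MultiCircuit ι, C.verts.card = Fintype.card ι → ¬InGraph A C)

open Classical in
/-- The multiplicity of `l` as a root of the characteristic polynomial `χ_A(t)`:
for a real `l` it is the difference between the maximal and the minimal length of an
`l`-maximal multi-circuit; for `l = ε` it is `n` minus the maximal length of a
multi-circuit of `G(A)`.  It is `0` when `l` is not a root. -/
noncomputable def rootMult (A : Matrix ι ι RMax) (l : RMax) : ℕ :=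
  if l = ⊥ then
    Fintype.card ι - sSup {m : ℕ | ∃ C : MultiCircuit ι, InGraph A C ∧ C.verts.card = m}
  else
    sSup {m : ℕ | ∃ C : MultiCircuit ι, IsLamMax A C l ∧ C.verts.card = m} -
      sInf {m : ℕ | ∃ C : MultiCircuit ι, IsLamMax A C l ∧ C.verts.card = m}

/-- The matrix `A_C`. -/
def matC (A : Matrix ι ι RMax) (C : MultiCircuit ι) : Matrix ι ι RMax :=
  fun i j => if i ∈ C.verts ∧ j = C.perm i then A i j else ⊥

/-- The matrix `A_{∖C}`. -/
def matNotC (A : Matrix ι ι RMax) (C : MultiCircuit ι) : Matrix ι ι RMax :=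
  fun i j => if i ∈ C.verts ∧ j = C.perm i then ⊥ else A i j

/-- The diagonal matrix `E_C`. -/
def eC (C : MultiCircuit ι) : Matrix ι ι RMax :=
  fun i j => if i = j ∧ i ∈ C.verts then (0 : RMax) else ⊥

/-- The diagonal matrix `E_{∖C}`. -/
def eNotC (C : MultiCircuit ι) : Matrix ι ι RMax :=
  fun i j => if i = j ∧ i ∉ C.verts then (0 : RMax) else ⊥

/-- `W(A,l,C) = {x : (A_{∖C} ⊕ l ⊗ E_C) ⊗ x = (A_C ⊕ l ⊗ E_{∖C}) ⊗ x}`. -/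
def WAC (A : Matrix ι ι RMax) (l : RMax) (C : MultiCircuit ι) : Set (Vec ι) :=
  {x | mpMulVec (mpAddM (matNotC A C) (smulM l (eC C))) x =
       mpMulVec (mpAddM (matC A C) (smulM l (eNotC C))) x}

/-- `B_{A,l,C} = (A_C ⊕ l ⊗ E_{∖C})^{−1} ⊗ (A_{∖C} ⊕ l ⊗ E_C)`. -/
def Bmat (A : Matrix ι ι RMax) (l : RMax) (C : MultiCircuit ι) : Matrix ι ι RMax :=
  mpMul (genInv (mpAddM (matC A C) (smulM l (eNotC C)))) (mpAddM (matNotC A C) (smulM l (eC C)))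

/-- Assumption (★): for each `l ∈ ℝ_max`, any two distinct `l`-maximal multi-circuits
of `G(A)` have different lengths. -/
def StarAssumption (A : Matrix ι ι RMax) : Prop :=
  ∀ l : RMax, ∀ C C' : MultiCircuit ι, IsLamMax A C l → IsLamMax A C' l →
    C.verts.card = C'.verts.card → C = C'

/-- The perturbed matrix `A(ζ;δ)` with entries `a_{ij} − ζ_{ij}·δ` (ε stays ε). -/
def perturb (A : Matrix ι ι RMax) (ζ : Matrix ι ι ℝ) (δ : ℝ) : Matrix ι ι RMax :=
  fun i j => A i j + ((-(ζ i j * δ) : ℝ) : RMax)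

/-- The set `Z` of perturbation directions `ζ ∈ [0,1]^{n×n}` for which `A(ζ;δ)`
satisfies (★) for all sufficiently small `δ > 0`. -/
def Zset (A : Matrix ι ι RMax) : Set (Matrix ι ι ℝ) :=
  {ζ | (∀ i j, ζ i j ∈ Set.Icc (0 : ℝ) 1) ∧
    ∃ δ' : ℝ, 0 < δ' ∧ ∀ δ : ℝ, 0 < δ → δ < δ' → StarAssumption (perturb A ζ δ)}

/-- The interval `B(l, r) = [l − r, l + r] ⊆ ℝ_max` (and `B(ε, r) = {ε}`). -/
def mpBall (l : RMax) (r : ℝ) : Set RMax :=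
  {l' | (l = ⊥ ∧ l' = ⊥) ∨ ∃ x y : ℝ, l = (x : RMax) ∧ l' = (y : RMax) ∧ |y - x| ≤ r}

/-- Convergence in `ℝ_max` as `δ → +0`. -/
def RMaxTendsto (f : ℝ → RMax) (a : RMax) : Prop :=
  (a = ⊥ → ∀ M : ℝ, ∀ᶠ δ in nhdsWithin 0 (Set.Ioi (0 : ℝ)), f δ < (M : RMax)) ∧
    (∀ x : ℝ, a = (x : RMax) → ∀ ε : ℝ, 0 < ε →
      ∀ᶠ δ in nhdsWithin 0 (Set.Ioi (0 : ℝ)), ∃ y : ℝ, f δ = (y : RMax) ∧ |y - x| < ε)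

/-- The (max-plus) sum `⊕_k U_k` of a family of subsets of `ℝ_max^n`. -/
def setSum {κ : Type} (U : κ → Set (Vec ι)) : Set (Vec ι) :=
  {x | ∃ s : Finset κ, ∃ f : κ → Vec ι, (∀ k ∈ s, f k ∈ U k) ∧
    x = fun i => s.sup fun k => f k i}

/-- The limit `lim_{δ→+0} S(δ)` of a parametrized family of subsets of `ℝ_max^n`. -/
def setLim (S : ℝ → Set (Vec ι)) : Set (Vec ι) :=
  {x | ∃ g : ℝ → Vec ι, (∀ δ : ℝ, 0 < δ → g δ ∈ S δ) ∧
    ∀ i : ι, RMaxTendsto (fun δ => g δ i) (x i)}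

/-- The sum `⊕_{l' ∈ S} W(A', l', C_{l'})`, where `C_{l'}` is an `l'`-maximal
multi-circuit of `G(A')`. -/
def perturbSum (A' : Matrix ι ι RMax) (S : Set RMax) : Set (Vec ι) :=
  setSum fun l : S =>
    {x | ∃ C : MultiCircuit ι, IsLamMax A' C (l : RMax) ∧ x ∈ WAC A' (l : RMax) C}

/-- The algebraic eigenspace
`W(A,l) = ⋂_{ζ∈Z} lim_{δ→+0} ⊕_{l' ∈ B(l,nδ)} W(A(ζ;δ), l', C_{l'}(ζ;δ))`. -/
def algEigenspace (A : Matrix ι ι RMax) (l : RMax) : Set (Vec ι) :=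
  ⋂ ζ ∈ Zset A, setLim fun δ => perturbSum (perturb A ζ δ) (mpBall l (Fintype.card ι * δ))

/-- The max-plus span of a set of vectors: all finite max-plus linear combinations. -/
def mpSpan (S : Set (Vec ι)) : Set (Vec ι) :=
  {x | ∃ s : Finset (Vec ι), ↑s ⊆ S ∧ ∃ c : Vec ι → RMax,
    x = fun i => s.sup fun v => c v + v i}

/-- `B` is a basis of `U`: a minimal spanning set. -/
def IsBasis (B U : Set (Vec ι)) : Prop :=
  mpSpan B = U ∧ ∀ B' : Set (Vec ι), B' ⊆ B → mpSpan B' = U → B' = B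

/-- Tropical orthogonality: the maximum in `ᵗx ⊗ y = ⊕_i x_i ⊗ y_i` is attained
at least twice (a maximum equal to ε counting as attained by all indices). -/
def Orthogonal (x y : Vec ι) : Prop :=
  (Finset.univ.sup fun i => x i + y i) = ⊥ ∨
    ∃ i j : ι, i ≠ j ∧ x i + y i = (Finset.univ.sup fun k => x k + y k) ∧
      x j + y j = (Finset.univ.sup fun k => x k + y k)

/-- The tropical kernel of a matrix: vectors for which, in every row, the maximum is
attained at least twice (a maximum equal to ε counting as attained by all indices). -/
def tropKernel {κ : Type} (A : Matrix κ ι RMax) : Set (Vec ι) :=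
  {x | ∀ i : κ, (Finset.univ.sup fun j => A i j + x j) = ⊥ ∨
    ∃ j k : ι, j ≠ k ∧ A i j + x j = (Finset.univ.sup fun j' => A i j' + x j') ∧
      A i k + x k = (Finset.univ.sup fun j' => A i j' + x j')}

/-- `A` is (tropically) nonsingular: the maximum in `det A` is attained by exactly
one permutation. -/
def Nonsingular (A : Matrix ι ι RMax) : Prop :=
  ∃! π : Equiv.Perm ι, (∑ i, A i (π i)) = mpDet A

/-- The minor `A^{(r,c)}`, deleting row `r` and column `c`. -/
def mpMinor {n : ℕ} (A : Matrix (Fin (n + 1)) (Fin (n + 1)) RMax) (r c : Fin (n + 1)) :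
    Matrix (Fin n) (Fin n) RMax :=
  fun i j => A (r.succAbove i) (c.succAbove j)

/-- The max-plus adjugate, `adj(A)_{ij} = det A^{(j,i)}`. -/
def mpAdj {n : ℕ} (A : Matrix (Fin (n + 1)) (Fin (n + 1)) RMax) :
    Matrix (Fin (n + 1)) (Fin (n + 1)) RMax :=
  fun i j => mpDet (mpMinor A j i)

/-- The submatrix `[A_C]_{KK}` with `K = V(C)`. -/
def subPC (A : Matrix ι ι RMax) (C : MultiCircuit ι) :
    Matrix {k // k ∈ C.verts} {k // k ∈ C.verts} RMax :=
  fun i j => matC A C i.1 j.1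

/-- The submatrix `[A_{∖C}]_{KK}` with `K = V(C)`. -/
def subPNC (A : Matrix ι ι RMax) (C : MultiCircuit ι) :
    Matrix {k // k ∈ C.verts} {k // k ∈ C.verts} RMax :=
  fun i j => matNotC A C i.1 j.1

/-- The matrix `M = [A_C]_{KK}^{−1} ⊗ [A_{∖C}]_{KK}`. -/
def xiM (A : Matrix ι ι RMax) (C : MultiCircuit ι) :
    Matrix {k // k ∈ C.verts} {k // k ∈ C.verts} RMax :=
  mpMul (genInv (subPC A C)) (subPNC A C)

/-- `M* ⊗ ([A_C]_{KK}^{−1} ⊗ [A]_{KL}) ⊗ [x]_L`, the `K`-part of `ξ_{A,C}(x)`. -/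
def xiVec (A : Matrix ι ι RMax) (C : MultiCircuit ι) (x : Vec ι) : Vec {k // k ∈ C.verts} :=
  mpMulVec (mpStar (xiM A C)) (mpMulVec (genInv (subPC A C))
    (fun k : {k // k ∈ C.verts} =>
      (Finset.univ.filter fun j : ι => j ∉ C.verts).sup fun j => A k.1 j + x j))

/-- The linear map `ξ_{A,C} : ℝ_max^n → ℝ_max^n`. -/
def xi (A : Matrix ι ι RMax) (C : MultiCircuit ι) (x : Vec ι) : Vec ι :=
  fun i => if h : i ∈ C.verts then xiVec A C x ⟨i, h⟩ else x i

end Defs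

end

/-! Row `i` of `(A ⊕ λ ⊗ E_n) ⊗ x` is the maximum of the terms `a_{ij} + x_j` and `λ + x_i`.
A multi-circuit selects one of these terms in each row, and `x ∈ W(A,λ,C)` says exactly that in
every row the term selected by `C` attains the maximum and so does some other term.

If the terms selected by `C'` attain all row maxima, then the support of `x` is invariant under
the successor maps of `C'` and of any `λ`-maximal `C`. Following `C'` on the support and `C`
off it is again a multi-circuit, so `λ`-maximality of `C` bounds the weight of `C'` on the support
by that of `C`; summing the row inequalities over the support then forces every term selected
by `C` to be maximal. The second maximal term in each row is inherited from `C'`. -/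

open Finset

lemma Equiv.Perm.apply_iff_of_forall_imp {α : Type*} [Finite α] {f : Equiv.Perm α}
    {p : α → Prop} (h : ∀ a, p a → p (f a)) (a : α) : p (f a) ↔ p a :=
  ⟨fun ha => by simpa using Equiv.Perm.perm_symm_on_of_perm_on_finite h ha, h a⟩

lemma Finset.sup_erase_eq_iff {α β : Type*} [Fintype α] [DecidableEq α] [Nontrivial α]
    [LinearOrder β] [OrderBot β] (f : α → β) (c : α) :
    (univ.erase c).sup f = f c ↔ f c = univ.sup f ∧ ∃ k ≠ c, f k = univ.sup f := by
  have hsplit : univ.sup f = f c ⊔ (univ.erase c).sup f := by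
    rw [← sup_insert, insert_erase (mem_univ c)]
  constructor
  · intro h
    obtain ⟨d, hd⟩ := exists_ne c
    obtain ⟨k, hk, hk_eq⟩ :=
      exists_mem_eq_sup (univ.erase c) ⟨d, mem_erase.mpr ⟨hd, mem_univ d⟩⟩ f
    have htop : univ.sup f = f c := by rw [hsplit, h, sup_idem]
    rw [htop]
    exact ⟨rfl, k, ne_of_mem_erase hk, hk_eq.symm.trans h⟩
  · rintro ⟨hc, k, hk, hk_eq⟩
    refine le_antisymm ?_ ?_
    · rw [hc]; exact sup_mono (erase_subset c univ)
    · rw [hc, ← hk_eq]; exact le_sup (mem_erase.mpr ⟨hk, mem_univ k⟩)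

lemma WithBot.eq_of_forall_le_of_sum_le {ι α : Type*} [AddCommMonoid α] [PartialOrder α]
    [IsOrderedCancelAddMonoid α] {s : Finset ι} {f g : ι → WithBot α}
    (hfg : ∀ i ∈ s, f i ≤ g i) (hg : ∀ i ∈ s, g i ≠ ⊥) (hsum : ∑ i ∈ s, g i ≤ ∑ i ∈ s, f i) :
    ∀ i ∈ s, f i = g i := by
  have hf : ∀ i ∈ s, f i ≠ ⊥ := by
    intro i hi hfi
    have : ∑ i ∈ s, g i = ⊥ :=
      le_bot_iff.mp (hsum.trans (WithBot.sum_eq_bot_iff.mpr ⟨i, hi, hfi⟩).le)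
    obtain ⟨j, hj, hgj⟩ := WithBot.sum_eq_bot_iff.mp this
    exact hg j hj hgj
  have lift : ∀ h : ι → WithBot α, (∀ i ∈ s, h i ≠ ⊥) →
      ∀ i ∈ s, h i = (((h i).unbotD 0 : α) : WithBot α) := fun h hh i hi => by
    obtain ⟨a, ha⟩ := WithBot.ne_bot_iff_exists.mp (hh i hi)
    rw [← ha, WithBot.unbotD_coe]
  rw [sum_congr rfl (lift f hf), sum_congr rfl (lift g hg), ← WithBot.coe_sum,
    ← WithBot.coe_sum, WithBot.coe_le_coe] at hsum
  intro i hi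
  rw [lift f hf i hi, lift g hg i hi, WithBot.coe_inj]
  refine ((sum_eq_sum_iff_of_le fun j hj => ?_).mp
    (le_antisymm (sum_le_sum fun j hj => ?_) hsum)) i hi
  all_goals
    have := hfg j hj
    rwa [lift f hf j hj, lift g hg j hj, WithBot.coe_le_coe] at this

section RowTerms

variable {ι : Type} (A : Matrix ι ι RMax) (l : RMax) (x : Vec ι)

/-- Row `i` of `A ⊕ l ⊗ E_n` with the two summands of its diagonal entry kept apart:
index `none` is the `l` on the diagonal, index `some j` is `a_{ij}`. -/
def rowEntry (i : ι) (k : Option ι) : RMax := k.elim l (A i)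

def rowTerm (i : ι) (k : Option ι) : RMax := rowEntry A l i k + x (k.getD i)

def rowMax [Fintype ι] (i : ι) : RMax := univ.sup (rowTerm A l x i)

lemma rowTerm_le_rowMax [Fintype ι] (i : ι) (k : Option ι) :
    rowTerm A l x i k ≤ rowMax A l x i :=
  le_sup (mem_univ k)

lemma rowMax_ne_bot [Fintype ι] {μ : ℝ} {i : ι} (hi : x i ≠ ⊥) : rowMax A μ x i ≠ ⊥ :=
  ne_bot_of_le_ne_bot (WithBot.add_ne_bot.mpr ⟨WithBot.coe_ne_bot, hi⟩)
    (rowTerm_le_rowMax A μ x i none)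

variable [DecidableEq ι]

def MultiCircuit.entryIdx (D : MultiCircuit ι) (i : ι) : Option ι :=
  if i ∈ D.verts then some (D.perm i) else none

lemma MultiCircuit.getD_entryIdx (D : MultiCircuit ι) (i : ι) :
    (D.entryIdx i).getD i = D.perm i := by
  unfold MultiCircuit.entryIdx
  split_ifs with h
  · rfl
  · exact (D.fixes i h).symm

lemma rowTerm_entryIdx (D : MultiCircuit ι) (i : ι) :
    rowTerm A l x i (D.entryIdx i) = rowEntry A l i (D.entryIdx i) + x (D.perm i) := by
  rw [rowTerm, D.getD_entryIdx]

variable [Fintype ι]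

lemma mpMulVec_matC_add_eNotC (D : MultiCircuit ι) (i : ι) :
    mpMulVec (mpAddM (matC A D) (smulM l (eNotC D))) x i = rowTerm A l x i (D.entryIdx i) := by
  refine le_antisymm (Finset.sup_le fun j _ => ?_) ?_
  · by_cases hi : i ∈ D.verts
    · by_cases hj : j = D.perm i <;>
        simp [mpAddM, matC, smulM, eNotC, rowTerm, rowEntry, MultiCircuit.entryIdx, hi, hj]
    · by_cases hj : j = i <;>
        simp [mpAddM, matC, smulM, eNotC, rowTerm, rowEntry, MultiCircuit.entryIdx, hi, hj,
          D.fixes i hi, Ne.symm]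
  · rw [rowTerm_entryIdx]
    refine le_trans ?_ (le_sup (mem_univ (D.perm i)))
    by_cases hi : i ∈ D.verts
    · simp [mpAddM, matC, smulM, eNotC, rowEntry, MultiCircuit.entryIdx, hi]
    · simp [mpAddM, matC, smulM, eNotC, rowEntry, MultiCircuit.entryIdx, hi, D.fixes i hi]

lemma mpMulVec_matNotC_add_eC (D : MultiCircuit ι) (i : ι) :
    mpMulVec (mpAddM (matNotC A D) (smulM l (eC D))) x i =
      (univ.erase (D.entryIdx i)).sup (rowTerm A l x i) := by
  have hle : ∀ k ≠ D.entryIdx i,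
      rowTerm A l x i k ≤ (univ.erase (D.entryIdx i)).sup (rowTerm A l x i) :=
    fun k hk => le_sup (mem_erase.mpr ⟨hk, mem_univ k⟩)
  refine le_antisymm (Finset.sup_le fun j _ => ?_) (Finset.sup_le fun k hk => ?_)
  · simp only [mpAddM, ← max_add_add_right, max_le_iff]
    constructor
    · by_cases h : i ∈ D.verts ∧ j = D.perm i
      · simp [matNotC, h]
      · refine le_of_eq_of_le ?_ (hle (some j) ?_)
        · simp [matNotC, h, rowTerm, rowEntry]
        · simp only [MultiCircuit.entryIdx]; split_ifs <;> grind
    · by_cases h : i = j ∧ i ∈ D.verts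
      · obtain ⟨rfl, hi⟩ := h
        refine le_of_eq_of_le ?_ (hle none ?_)
        · simp [smulM, eC, hi, rowTerm, rowEntry]
        · simp [MultiCircuit.entryIdx, hi]
      · simp [smulM, eC, h]
  · replace hk := (mem_erase.mp hk).1
    refine le_trans ?_ (le_sup (mem_univ (k.getD i)))
    cases k with
    | none =>
      have hi : i ∈ D.verts := by by_contra hi; simp [MultiCircuit.entryIdx, hi] at hk
      simp only [mpAddM, smulM, eC, hi, rowTerm, rowEntry]
      gcongr
      simp
    | some j =>
      have h : ¬(i ∈ D.verts ∧ j = D.perm i) := by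
        rintro ⟨hi, rfl⟩; simp [MultiCircuit.entryIdx, hi] at hk
      simp only [mpAddM, matNotC, if_neg h, rowTerm, rowEntry, Option.elim_some,
        Option.getD_some]
      gcongr
      exact le_max_left _ _

def AttainsRowMax (D : MultiCircuit ι) : Prop :=
  ∀ i, rowTerm A l x i (D.entryIdx i) = rowMax A l x i

lemma mem_WAC_iff (D : MultiCircuit ι) :
    x ∈ WAC A l D ↔ AttainsRowMax A l x D ∧
      ∀ i, ∃ k ≠ D.entryIdx i, rowTerm A l x i k = rowMax A l x i := by
  simp only [WAC, Set.mem_ofPred_eq, funext_iff, mpMulVec_matC_add_eNotC,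
    mpMulVec_matNotC_add_eC, AttainsRowMax, ← forall_and]
  refine forall_congr' fun i => ?_
  have : Nonempty ι := ⟨i⟩
  exact sup_erase_eq_iff _ _

end RowTerms

section Maximal

variable {ι : Type} [Fintype ι] [DecidableEq ι] {A : Matrix ι ι RMax}

lemma valAt_eq_sum_rowEntry (A : Matrix ι ι RMax) (D : MultiCircuit ι) (l : RMax) :
    ValAt A D l = ∑ i, rowEntry A l i (D.entryIdx i) := by
  have hentry : ∀ i,
      rowEntry A l i (D.entryIdx i) = if i ∈ D.verts then A i (D.perm i) else l :=
    fun i => by unfold MultiCircuit.entryIdx; split_ifs <;> rfl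
  simp only [hentry, sum_ite, sum_const, ValAt, mcWeight]
  congr 1
  · exact sum_congr (by ext; simp) fun _ _ => rfl
  · rw [filter_not, card_sdiff_of_subset (filter_subset _ _)]
    simp

lemma MaximalAt.rowEntry_ne_bot {C : MultiCircuit ι} {μ : ℝ} (hC : MaximalAt A C μ) (i : ι) :
    rowEntry A μ i (C.entryIdx i) ≠ ⊥ := by
  have hempty : ValAt A ⟨∅, 1, fun _ _ => rfl⟩ (μ : RMax) ≠ ⊥ := by
    rw [valAt_eq_sum_rowEntry, Ne, WithBot.sum_eq_bot_iff]
    simp [MultiCircuit.entryIdx, rowEntry]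
  have hC_ne : ValAt A C μ ≠ ⊥ := fun h => hempty (le_bot_iff.mp (h ▸ hC _))
  rw [valAt_eq_sum_rowEntry, Ne, WithBot.sum_eq_bot_iff] at hC_ne
  exact fun h => hC_ne ⟨i, mem_univ i, h⟩

end Maximal

def MultiCircuit.piecewise {ι : Type} [Finite ι] [DecidableEq ι] (p : ι → Prop)
    [DecidablePred p] (D D' : MultiCircuit ι) (hD : ∀ i, p i → p (D.perm i))
    (hD' : ∀ i, ¬p i → ¬p (D'.perm i)) : MultiCircuit ι where
  verts := D.verts.filter p ∪ D'.verts.filter (¬p ·)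
  perm := (D.perm.subtypePermOfFintype hD).subtypeCongr (D'.perm.subtypePermOfFintype hD')
  fixes i hi := by
    by_cases h : p i
    · rw [Equiv.Perm.subtypeCongr.left_apply _ _ h]
      exact D.fixes i (by simp_all)
    · rw [Equiv.Perm.subtypeCongr.right_apply _ _ h]
      exact D'.fixes i (by simp_all)

lemma MultiCircuit.entryIdx_piecewise {ι : Type} [Finite ι] [DecidableEq ι] (p : ι → Prop)
    [DecidablePred p] (D D' : MultiCircuit ι) (hD : ∀ i, p i → p (D.perm i))
    (hD' : ∀ i, ¬p i → ¬p (D'.perm i)) (i : ι) :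
    (D.piecewise p D' hD hD').entryIdx i = if p i then D.entryIdx i else D'.entryIdx i := by
  by_cases h : p i
  all_goals simp [MultiCircuit.entryIdx, MultiCircuit.piecewise, h,
    Equiv.Perm.subtypeCongr.left_apply, Equiv.Perm.subtypeCongr.right_apply]

section Support

variable {ι : Type} [Fintype ι] [DecidableEq ι] {A : Matrix ι ι RMax} {μ : ℝ} {x : Vec ι}
  {D : MultiCircuit ι} {i : ι}

lemma AttainsRowMax.perm_apply_ne_bot (hD : AttainsRowMax A μ x D) (hi : x i ≠ ⊥) :
    x (D.perm i) ≠ ⊥ := by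
  have h := rowMax_ne_bot A x (μ := μ) hi
  rw [← hD i, rowTerm_entryIdx] at h
  exact (WithBot.add_ne_bot.mp h).2

lemma AttainsRowMax.rowMax_eq_bot (hD : AttainsRowMax A μ x D) (hi : x i = ⊥) :
    rowMax A μ x i = ⊥ := by
  by_contra h
  rw [← hD i, rowTerm_entryIdx] at h
  have hsupp := Equiv.Perm.apply_iff_of_forall_imp (p := (x · ≠ ⊥)) fun _ => hD.perm_apply_ne_bot
  exact (hsupp i).mp (WithBot.add_ne_bot.mp h).2 hi

lemma MaximalAt.perm_apply_eq_bot (hD : MaximalAt A D μ) (hi : rowMax A μ x i = ⊥) :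
    x (D.perm i) = ⊥ := by
  have h := rowTerm_le_rowMax A μ x i (D.entryIdx i)
  rw [hi, le_bot_iff, rowTerm_entryIdx, WithBot.add_eq_bot] at h
  exact h.resolve_left (hD.rowEntry_ne_bot i)

end Support

section Exchange

variable {ι : Type} [Fintype ι] [DecidableEq ι] {A : Matrix ι ι RMax} {C : MultiCircuit ι}
  {μ : ℝ}

lemma MaximalAt.sum_filter_rowEntry_le (hC : MaximalAt A C μ) (D : MultiCircuit ι)
    (p : ι → Prop) [DecidablePred p] (hD : ∀ i, p i → p (D.perm i))
    (hC_p : ∀ i, ¬p i → ¬p (C.perm i)) :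
    ∑ i ∈ univ.filter p, rowEntry A μ i (D.entryIdx i) ≤
      ∑ i ∈ univ.filter p, rowEntry A μ i (C.entryIdx i) := by
  have h := hC (D.piecewise p C hD hC_p)
  simp only [valAt_eq_sum_rowEntry, MultiCircuit.entryIdx_piecewise, apply_ite, sum_ite,
    ← sum_filter_add_sum_filter_not univ p (fun i => rowEntry A μ i (C.entryIdx i))] at h
  refine (WithBot.add_le_add_iff_right ?_).mp h
  rw [Ne, WithBot.sum_eq_bot_iff]
  exact fun ⟨i, _, hi⟩ => hC.rowEntry_ne_bot i hi

theorem MaximalAt.attainsRowMax {C' : MultiCircuit ι} (hC : MaximalAt A C μ) {x : Vec ι}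
    (hC' : AttainsRowMax A μ x C') : AttainsRowMax A μ x C := by
  have hC'_supp : ∀ i, x i ≠ ⊥ → x (C'.perm i) ≠ ⊥ := fun _ => hC'.perm_apply_ne_bot
  have hC_supp : ∀ i, x i = ⊥ → x (C.perm i) = ⊥ := fun _ hi =>
    hC.perm_apply_eq_bot (hC'.rowMax_eq_bot hi)
  have hC_iff i : x (C.perm i) ≠ ⊥ ↔ x i ≠ ⊥ :=
    (Equiv.Perm.apply_iff_of_forall_imp hC_supp i).not
  set T := univ.filter (x · ≠ ⊥)
  have hsum_x : ∀ D : MultiCircuit ι, (∀ i, x (D.perm i) ≠ ⊥ ↔ x i ≠ ⊥) →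
      ∑ i ∈ T, x (D.perm i) = ∑ i ∈ T, x i :=
    fun D hD => sum_equiv D.perm (by simp [T, hD]) fun _ _ => rfl
  have hsum : ∑ i ∈ T, rowMax A μ x i ≤ ∑ i ∈ T, rowTerm A μ x i (C.entryIdx i) :=
    calc ∑ i ∈ T, rowMax A μ x i
        = ∑ i ∈ T, (rowEntry A μ i (C'.entryIdx i) + x (C'.perm i)) :=
          sum_congr rfl fun i _ => by rw [← hC' i, rowTerm_entryIdx]
      _ = ∑ i ∈ T, rowEntry A μ i (C'.entryIdx i) + ∑ i ∈ T, x i := by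
          rw [sum_add_distrib, hsum_x C' (Equiv.Perm.apply_iff_of_forall_imp hC'_supp)]
      _ ≤ ∑ i ∈ T, rowEntry A μ i (C.entryIdx i) + ∑ i ∈ T, x i := by
          gcongr ?_ + _
          exact hC.sum_filter_rowEntry_le C' _ hC'_supp fun i => (hC_iff i).not.mpr
      _ = ∑ i ∈ T, rowTerm A μ x i (C.entryIdx i) := by
          simp only [rowTerm_entryIdx, sum_add_distrib, hsum_x C hC_iff]
  intro i
  by_cases hi : x i = ⊥
  · exact le_antisymm (rowTerm_le_rowMax ..) (hC'.rowMax_eq_bot hi ▸ bot_le)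
  · exact WithBot.eq_of_forall_le_of_sum_le (fun j _ => rowTerm_le_rowMax ..)
      (fun j hj => rowMax_ne_bot A x (mem_filter.mp hj).2) hsum i (by simpa [T] using hi)

theorem WAC_subset_WAC_of_maximalAt (hC : MaximalAt A C μ) (C' : MultiCircuit ι) :
    WAC A μ C' ⊆ WAC A μ C := by
  intro x hx
  rw [mem_WAC_iff] at hx ⊢
  refine ⟨hC.attainsRowMax hx.1, fun i => ?_⟩
  obtain ⟨k, hk, hk_max⟩ := hx.2 i
  by_cases h : k = C.entryIdx i
  · exact ⟨C'.entryIdx i, fun h' => hk (h.trans h'.symm), hx.1 i⟩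
  · exact ⟨k, h, hk_max⟩

end Exchange

theorem WAC_subset_of_maximal_general {n : ℕ} (A : Matrix (Fin n) (Fin n) RMax)
    (l : ℝ) (C C' : MultiCircuit (Fin n))
    (hC : IsLamMax A C (l : RMax)) :
    WAC A (l : RMax) C' ⊆ WAC A (l : RMax) C ∧
      (IsLamMax A C' (l : RMax) → WAC A (l : RMax) C = WAC A (l : RMax) C') :=
  ⟨WAC_subset_WAC_of_maximalAt (hC.1 l rfl) C', fun hC' =>
    (WAC_subset_WAC_of_maximalAt (hC'.1 l rfl) C).antisymm
      (WAC_subset_WAC_of_maximalAt (hC.1 l rfl) C')⟩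

theorem WAC_subset_of_maximal {n : ℕ} (A : Matrix (Fin n) (Fin n) RMax)
    (hA : StarAssumption A) (l : ℝ) (C C' : MultiCircuit (Fin n))
    (hC : IsLamMax A C (l : RMax)) :
    WAC A (l : RMax) C' ⊆ WAC A (l : RMax) C ∧
      (IsLamMax A C' (l : RMax) → WAC A (l : RMax) C = WAC A (l : RMax) C') :=
  WAC_subset_of_maximal_general A l C C' hC
end

section
/- For every matrix A ∈ ℝ_max^{n×n}, the maximum of the average weights of all elementary circuits in G(A) (taken to be ε if G(A) contains no circuit) is the maximum eigenvalue of A: it is an eigenvalue of A, and every eigenvalue of A is less than or equal to it. -/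
open Filter

/-!
If `A ⊗ w = μ ⊗ w` with `μ` finite, pick for every `i` in the support of `w` an index
attaining the maximum in `(A ⊗ w)_i`; following these choices eventually closes an elementary
circuit, and summing the equalities along it shows that its average weight is `μ`, so `μ ≤ ρ`.

For finite `ρ`, every circuit of `B = (-ρ) ⊗ A` has weight `≤ 0`, hence so has every closed
walk (split it at a repeated vertex), and the maximal weights of walks ending at a vertex `η`
of a critical circuit form a vector `x` with `B ⊗ x = x`. For `ρ = ε` the graph is acyclic, so
some vertex has no incoming edge and its unit vector is an eigenvector for `ε`.
-/

open Function

lemma List.exists_eq_append_cons_append_cons_of_not_nodup {α : Type*} :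
    ∀ {l : List α}, ¬ l.Nodup → ∃ a l₁ l₂ l₃, l = l₁ ++ a :: (l₂ ++ a :: l₃)
  | [], h => absurd List.nodup_nil h
  | b :: t, h => by
    by_cases hb : b ∈ t
    · obtain ⟨s, r, rfl⟩ := List.append_of_mem hb
      exact ⟨b, [], s, r, rfl⟩
    · obtain ⟨a, l₁, l₂, l₃, rfl⟩ := exists_eq_append_cons_append_cons_of_not_nodup
        fun hn => h (List.nodup_cons.mpr ⟨hb, hn⟩)
      exact ⟨a, b :: l₁, l₂, l₃, rfl⟩

section WalkWeight

variable {ι M : Type*}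

def walkWeight [Add M] [Zero M] (B : Matrix ι ι M) : List ι → M
  | [] => 0
  | [_] => 0
  | a :: b :: l => B a b + walkWeight B (b :: l)

variable [AddCommMonoid M] (B : Matrix ι ι M)

@[simp]
lemma walkWeight_singleton (a : ι) : walkWeight B [a] = 0 := rfl

@[simp]
lemma walkWeight_cons_cons (a b : ι) (l : List ι) :
    walkWeight B (a :: b :: l) = B a b + walkWeight B (b :: l) := rfl

lemma walkWeight_append_cons (v : ι) (l₂ : List ι) :
    ∀ l₁ : List ι,
      walkWeight B (l₁ ++ v :: l₂) = walkWeight B (l₁ ++ [v]) + walkWeight B (v :: l₂)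
  | [] => by simp
  | [a] => by simp
  | a :: b :: l₁ => by
    simp only [List.cons_append, walkWeight_cons_cons] at *
    rw [← List.cons_append, walkWeight_append_cons v l₂ (b :: l₁), List.cons_append,
      add_assoc]

lemma walkWeight_cut_closed (p q r : List ι) (a : ι) :
    walkWeight B (p ++ a :: (q ++ a :: r)) =
      walkWeight B (p ++ a :: r) + walkWeight B (a :: q ++ [a]) := by
  rw [walkWeight_append_cons B a _ p, ← List.cons_append, walkWeight_append_cons B a r (a :: q),
    walkWeight_append_cons B a r p, List.cons_append, add_right_comm, add_assoc]

lemma walkWeight_cons_eq_sum_zipWith (a : ι) (l : List ι) :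
    walkWeight B (a :: l) = (List.zipWith (fun i j => B i j) (a :: l) l).sum := by
  induction l generalizing a with
  | nil => rfl
  | cons b l ih => rw [walkWeight_cons_cons, ih]; rfl

lemma exists_walkWeight_eq_add_closed_of_not_nodup {v : ι} {L : List ι}
    (h : ¬ (v :: L).Nodup) (j : ι) : ∃ L' a q, L'.length < L.length ∧ q.length < L.length ∧
      walkWeight B (v :: L ++ [j]) =
        walkWeight B (v :: L' ++ [j]) + walkWeight B (a :: q ++ [a]) := by
  obtain ⟨a, p, q, r, hL⟩ := List.exists_eq_append_cons_append_cons_of_not_nodup h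
  have hlen := congrArg List.length hL
  simp only [List.length_cons, List.length_append] at hlen
  rcases p with _ | ⟨b, p⟩ <;>
    simp only [List.nil_append, List.cons_append, List.cons.injEq] at hL <;>
    obtain ⟨rfl, rfl⟩ := hL
  · refine ⟨r, v, q, by omega, by omega, ?_⟩
    simpa using walkWeight_cut_closed B [] q (r ++ [j]) v
  · refine ⟨p ++ a :: r, a, q, ?_, by omega, ?_⟩
    · simp only [List.length_append, List.length_cons]
      omega
    simpa using walkWeight_cut_closed B (v :: p) q (r ++ [j]) a

variable [PartialOrder M] [IsOrderedAddMonoid M]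

lemma walkWeight_closed_nonpos
    (h : ∀ v L, (v :: L).Nodup → walkWeight B (v :: L ++ [v]) ≤ 0) (v : ι) (L : List ι) :
    walkWeight B (v :: L ++ [v]) ≤ 0 := by
  induction hn : L.length using Nat.strong_induction_on generalizing v L with
  | _ n ih =>
    by_cases hnd : (v :: L).Nodup
    · exact h v L hnd
    obtain ⟨L', a, q, hL', hq, heq⟩ := exists_walkWeight_eq_add_closed_of_not_nodup B hnd v
    rw [heq]
    exact add_nonpos (ih _ (hn ▸ hL') v L' rfl) (ih _ (hn ▸ hq) a q rfl)

lemma exists_nodup_walkWeight_le (hclosed : ∀ v L, walkWeight B (v :: L ++ [v]) ≤ 0)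
    (i j : ι) (L : List ι) :
    ∃ L', (i :: L').Nodup ∧ walkWeight B (i :: L ++ [j]) ≤ walkWeight B (i :: L' ++ [j]) := by
  induction hn : L.length using Nat.strong_induction_on generalizing L with
  | _ n ih =>
    by_cases hnd : (i :: L).Nodup
    · exact ⟨L, hnd, le_rfl⟩
    obtain ⟨L', a, q, hL', -, heq⟩ := exists_walkWeight_eq_add_closed_of_not_nodup B hnd j
    obtain ⟨L'', hnd'', hle⟩ := ih _ (hn ▸ hL') L' rfl
    exact ⟨L'', hnd'', heq ▸ (add_le_of_le_of_nonpos le_rfl (hclosed a q)).trans hle⟩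

end WalkWeight

section Orbits

variable {α : Type*}

lemma exists_iterate_mem_periodicPts [Finite α] (g : α → α) (x : α) :
    ∃ m, g^[m] x ∈ periodicPts g := by
  obtain ⟨a, b, hab, h⟩ := Finite.exists_ne_map_eq_of_infinite fun t : ℕ => g^[t] x
  wlog hlt : a < b generalizing a b
  · exact this b a hab.symm h.symm (by omega)
  refine ⟨a, mk_mem_periodicPts (n := b - a) (by omega) ?_⟩
  change g^[b - a] (g^[a] x) = g^[a] x
  rw [← iterate_add_apply, Nat.sub_add_cancel hlt.le]
  exact h.symm

variable [DecidableEq α]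

lemma exists_nodup_formPerm_eq_of_mem_periodicPts {g : α → α} {y : α}
    (hy : y ∈ periodicPts g) :
    ∃ L : List α, (y :: L).Nodup ∧ (∀ x, x ∈ y :: L ↔ ∃ n, g^[n] y = x) ∧
      ∀ x ∈ y :: L, (y :: L).formPerm x = g x := by
  obtain ⟨p, hp⟩ := Nat.exists_eq_succ_of_ne_zero (minimalPeriod_pos_of_mem_periodicPts hy).ne'
  have horbit : (List.range (minimalPeriod g y)).map (g^[·] y) =
      y :: (List.range p).map (g^[· + 1] y) := by
    rw [hp, List.range_succ_eq_map]
    simp [Function.comp_def]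
  have hnd : (y :: (List.range p).map (g^[· + 1] y)).Nodup := by
    rw [← horbit]
    exact Cycle.nodup_coe_iff.mp nodup_periodicOrbit
  refine ⟨_, hnd, fun x => ?_, fun x hx => ?_⟩
  · rw [← horbit, ← Cycle.mem_coe_iff]
    exact mem_periodicOrbit_iff hy
  · rw [← horbit] at hnd hx ⊢
    obtain ⟨t, ht, rfl⟩ := List.getElem_of_mem hx
    rw [List.formPerm_apply_getElem _ hnd]
    simp only [List.getElem_map, List.getElem_range, List.length_map, List.length_range,
      iterate_mod_minimalPeriod_eq, iterate_succ_apply']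

lemma exists_nodup_formPerm_of_forall_exists [Finite α] {P : α → Prop} {R : α → α → Prop}
    (h : ∀ i, P i → ∃ j, P j ∧ R i j) {i₀ : α} (hi₀ : P i₀) :
    ∃ L : List α, L ≠ [] ∧ L.Nodup ∧ ∀ x ∈ L, P x ∧ R x (L.formPerm x) := by
  choose! g hg using h
  have hP : ∀ n, P (g^[n] i₀) := fun n => by
    induction n with
    | zero => exact hi₀
    | succ n ih => exact iterate_succ_apply' g n i₀ ▸ (hg _ ih).1
  obtain ⟨m, hm⟩ := exists_iterate_mem_periodicPts g i₀
  obtain ⟨L, hnd, hmem, hperm⟩ := exists_nodup_formPerm_eq_of_mem_periodicPts hm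
  refine ⟨_, List.cons_ne_nil _ _, hnd, fun x hx => ?_⟩
  obtain ⟨n, rfl⟩ := (hmem x).mp hx
  rw [hperm _ hx, ← iterate_add_apply]
  exact ⟨hP _, (hg _ (hP _)).2⟩

end Orbits

namespace MultiCircuit

variable {ι : Type} [DecidableEq ι]

def ofList (L : List ι) : MultiCircuit ι :=
  ⟨L.toFinset, L.formPerm, fun _ h => List.formPerm_apply_of_notMem (by simpa using h)⟩

lemma isCircuit_ofList {L : List ι} (hnd : L.Nodup) (hne : L ≠ []) : IsCircuit (ofList L) :=
  ⟨by simpa [ofList, Finset.nonempty_iff_ne_empty] using hne,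
    fun _ hi _ hj =>
      hnd.isCycleOn_formPerm.2 (by simpa [ofList] using hi) (by simpa [ofList] using hj)⟩

lemma mcWeight_ofList (B : Matrix ι ι RMax) {v : ι} {L : List ι} (hnd : (v :: L).Nodup) :
    mcWeight B (ofList (v :: L)) = walkWeight B (v :: L ++ [v]) := by
  change ∑ x ∈ (v :: L).toFinset, B x ((v :: L).formPerm x) = _
  rw [List.sum_toFinset _ hnd, List.cons_append, walkWeight_cons_eq_sum_zipWith]
  congr 1
  refine List.ext_getElem (by simp) fun t h₁ h₂ => ?_
  have hcons :
      (v :: (L ++ [v]))[t]'(by simp at h₁ ⊢; omega) = (v :: L)[t]'(by simpa using h₁) := by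
    simp only [← List.cons_append]
    exact List.getElem_append_left _
  have hrot :
      (L ++ [v])[t]'(by simpa using h₁) = ((v :: L).rotate 1)[t]'(by simpa using h₁) := by
    simp
  simp only [List.getElem_map, List.getElem_zipWith, List.formPerm_apply_getElem _ hnd, hcons,
    hrot, List.getElem_rotate]

lemma perm_mem_verts (C : MultiCircuit ι) {i : ι} (hi : i ∈ C.verts) :
    C.perm i ∈ C.verts := by
  by_contra h
  rw [C.perm.injective (C.fixes _ h)] at h
  exact h hi

lemma exists_mcWeight_eq_walkWeight [Finite ι] {C : MultiCircuit ι} (hC : IsCircuit C)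
    (B : Matrix ι ι RMax) : ∃ v L, mcWeight B C = walkWeight B (v :: L ++ [v]) := by
  obtain ⟨v, hv⟩ := hC.1
  obtain ⟨L, hnd, hmem, hperm⟩ :=
    exists_nodup_formPerm_eq_of_mem_periodicPts (C.perm.injective.mem_periodicPts v)
  have hverts : (ofList (v :: L)).verts = C.verts := by
    ext x
    simp only [ofList, List.mem_toFinset, hmem]
    constructor
    · rintro ⟨n, rfl⟩
      exact Set.MapsTo.iterate (fun _ => C.perm_mem_verts) n hv
    · intro hx
      obtain ⟨n, hn⟩ := (hC.2 v hv x hx).exists_nat_pow_eq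
      exact ⟨n, by rwa [← Equiv.Perm.iterate_eq_pow] at hn⟩
  refine ⟨v, L, ?_⟩
  rw [← mcWeight_ofList B hnd]
  refine Finset.sum_congr hverts.symm fun x hx => ?_
  exact congrArg (B x) (hperm x (by simpa [ofList] using hx)).symm

end MultiCircuit

namespace RMax

lemma add_finsetSup {γ : Type*} (c : RMax) (s : Finset γ) (f : γ → RMax) :
    c + s.sup f = s.sup fun a => c + f a :=
  Finset.apply_sup_eq_sup_comp_of_linearOrder (c + ·) (fun _ _ h => add_le_add_right h c)
    (WithBot.add_bot c)

lemma nsmul_bot {k : ℕ} (hk : k ≠ 0) : k • (⊥ : RMax) = ⊥ := by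
  obtain ⟨m, rfl⟩ := Nat.exists_eq_succ_of_ne_zero hk
  rw [succ_nsmul]
  exact WithBot.add_bot _

lemma le_of_nsmul_le_nsmul {k : ℕ} (hk : k ≠ 0) {a b : RMax} (h : k • a ≤ k • b) :
    a ≤ b := by
  induction a using WithBot.recBotCoe with
  | bot => exact bot_le
  | coe a =>
    induction b using WithBot.recBotCoe with
    | bot =>
      rw [nsmul_bot hk, le_bot_iff, ← WithBot.coe_nsmul] at h
      exact absurd h WithBot.coe_ne_bot
    | coe b =>
      rw [← WithBot.coe_nsmul, ← WithBot.coe_nsmul, WithBot.coe_le_coe] at h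
      exact WithBot.coe_le_coe.mpr ((nsmul_le_nsmul_iff_right hk).mp h)

lemma coe_add_coe_neg (μ : ℝ) : (μ : RMax) + ((-μ : ℝ) : RMax) = 0 := by
  rw [← WithBot.coe_add, add_neg_cancel, WithBot.coe_zero]

end RMax

section Eigen

variable {ι : Type}

lemma mcWeight_eq_bot_iff {A : Matrix ι ι RMax} {C : MultiCircuit ι} :
    mcWeight A C = ⊥ ↔ ¬InGraph A C := by
  simp [mcWeight, InGraph, WithBot.sum_eq_bot_iff]

lemma mcWeight_smulM (c : RMax) (A : Matrix ι ι RMax) (C : MultiCircuit ι) :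
    mcWeight (smulM c A) C = C.verts.card • c + mcWeight A C := by
  simp only [mcWeight, smulM, Finset.sum_add_distrib, Finset.sum_const]

lemma exists_forall_eq_bot_of_forall_not_inGraph [Finite ι] [DecidableEq ι] [Nonempty ι]
    {A : Matrix ι ι RMax} (hA : ∀ C : MultiCircuit ι, IsCircuit C → ¬InGraph A C) :
    ∃ j, ∀ i, A i j = ⊥ := by
  by_contra! h
  obtain ⟨L, hne, hnd, hL⟩ := exists_nodup_formPerm_of_forall_exists (P := fun _ => True)
    (R := fun j i => A i j ≠ ⊥) (fun j _ => (h j).imp fun _ hi => ⟨trivial, hi⟩)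
    (i₀ := Classical.arbitrary ι) trivial
  -- following the predecessors traces a circuit backwards
  refine hA _ (MultiCircuit.isCircuit_ofList (List.nodup_reverse.mpr hnd) (by simpa using hne))
    fun x hx => ?_
  have hx' : L.formPerm⁻¹ x ∈ L :=
    List.formPerm_mem_iff_mem.mp (by simpa [MultiCircuit.ofList] using hx)
  change A x (L.reverse.formPerm x) ≠ ⊥
  simpa [List.formPerm_reverse] using (hL _ hx').2

variable [Fintype ι]

lemma mpMulVec_smulM (c : RMax) (A : Matrix ι ι RMax) (x : Vec ι) :
    mpMulVec (smulM c A) x = smulV c (mpMulVec A x) := by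
  ext i
  simp only [mpMulVec, smulM, smulV, RMax.add_finsetSup, add_assoc]

variable [DecidableEq ι]

lemma isEigen_bot_of_forall_eq_bot {A : Matrix ι ι RMax} {j : ι} (hj : ∀ i, A i j = ⊥) :
    IsEigen A ⊥ := by
  refine ⟨update (zeroV ι) j 0, fun h => by simpa [zeroV] using congrFun h j,
    funext fun i => ?_⟩
  simp only [mpMulVec, smulV, WithBot.bot_add]
  refine (Finset.sup_eq_bot_iff _ _).mpr fun k _ => ?_
  by_cases hk : k = j
  · simp [hk, hj]
  · simp [hk, zeroV]

lemma exists_circuit_mcWeight_eq_of_mpMulVec_eq {A : Matrix ι ι RMax} {w : Vec ι} {μ : ℝ}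
    (hw : w ≠ zeroV ι) (h : mpMulVec A w = smulV (μ : RMax) w) :
    ∃ C : MultiCircuit ι,
      IsCircuit C ∧ InGraph A C ∧ mcWeight A C = C.verts.card • (μ : RMax) := by
  have hsucc : ∀ i, w i ≠ ⊥ → ∃ j, w j ≠ ⊥ ∧ A i j + w j = μ + w i := by
    intro i hi
    obtain ⟨j, -, hj⟩ :=
      Finset.exists_mem_eq_sup _ ⟨i, Finset.mem_univ i⟩ fun j => A i j + w j
    have hj' : A i j + w j = μ + w i := hj.symm.trans (congrFun h i)
    have hne : A i j + w j ≠ ⊥ := hj' ▸ WithBot.add_ne_bot.mpr ⟨WithBot.coe_ne_bot, hi⟩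
    exact ⟨j, (WithBot.add_ne_bot.mp hne).2, hj'⟩
  obtain ⟨i₀, hi₀⟩ : ∃ i, w i ≠ ⊥ := by
    by_contra! h0
    exact hw (funext h0)
  obtain ⟨L, hne, hnd, hL⟩ := exists_nodup_formPerm_of_forall_exists hsucc hi₀
  set C := MultiCircuit.ofList L
  have hsupp : ∀ x ∈ C.verts, w x ≠ ⊥ := fun x hx => (hL x (List.mem_toFinset.mp hx)).1
  have hedge : ∀ x ∈ C.verts, A x (C.perm x) + w (C.perm x) = μ + w x := fun x hx =>
    (hL x (List.mem_toFinset.mp hx)).2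
  have hmoved : {x | C.perm x ≠ x} ⊆ C.verts := fun x hx => by_contra fun h => hx (C.fixes x h)
  have hsum : mcWeight A C + ∑ x ∈ C.verts, w x =
      C.verts.card • (μ : RMax) + ∑ x ∈ C.verts, w x :=
    calc mcWeight A C + ∑ x ∈ C.verts, w x
        = ∑ x ∈ C.verts, (A x (C.perm x) + w (C.perm x)) := by
          rw [Finset.sum_add_distrib, Equiv.Perm.sum_comp C.perm C.verts w hmoved, mcWeight]
      _ = ∑ x ∈ C.verts, ((μ : RMax) + w x) := Finset.sum_congr rfl hedge
      _ = C.verts.card • (μ : RMax) + ∑ x ∈ C.verts, w x := by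
          rw [Finset.sum_add_distrib, Finset.sum_const]
  have hsum_ne : ∑ x ∈ C.verts, w x ≠ ⊥ := by simpa [WithBot.sum_eq_bot_iff] using hsupp
  refine ⟨C, MultiCircuit.isCircuit_ofList hnd hne, fun x hx hbot => ?_,
    WithBot.add_right_cancel hsum_ne hsum⟩
  have := hedge x hx
  rw [hbot, WithBot.bot_add] at this
  exact WithBot.add_ne_bot.mpr ⟨WithBot.coe_ne_bot, hsupp x hx⟩ this.symm

lemma IsMaxCycleMean.le_of_isEigen {A : Matrix ι ι RMax} {ρ l : RMax} (hρ : IsMaxCycleMean A ρ)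
    (hl : IsEigen A l) : l ≤ ρ := by
  induction l using WithBot.recBotCoe with
  | bot => exact bot_le
  | coe μ =>
    obtain ⟨w, hw, h⟩ := hl
    obtain ⟨C, hC, hCA, hCw⟩ := exists_circuit_mcWeight_eq_of_mpMulVec_eq hw h
    exact RMax.le_of_nsmul_le_nsmul (Finset.card_pos.mpr hC.1).ne' (hCw ▸ hρ.1 C hC hCA)

lemma exists_mpMulVec_eq_self (B : Matrix ι ι RMax)
    (hB : ∀ C : MultiCircuit ι, IsCircuit C → mcWeight B C ≤ 0)
    {C : MultiCircuit ι} (hC : IsCircuit C) (hC0 : mcWeight B C = 0) :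
    ∃ x, x ≠ zeroV ι ∧ mpMulVec B x = x := by
  have hclosed : ∀ v L, walkWeight B (v :: L ++ [v]) ≤ 0 := walkWeight_closed_nonpos B
    fun v L hnd => MultiCircuit.mcWeight_ofList B hnd ▸
      hB _ (MultiCircuit.isCircuit_ofList hnd (List.cons_ne_nil v L))
  obtain ⟨η, L₀, hL₀⟩ := MultiCircuit.exists_mcWeight_eq_walkWeight hC B
  -- `x i` is the maximal weight of a walk from `i` to `η` (the `η`-th column of the Kleene plus
  -- `B⁺`); as closed walks are nonpositive, walks with fewer than `|ι|` inner vertices suffice.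
  let S := (List.finite_length_lt ι (Fintype.card ι)).toFinset
  let x : Vec ι := fun i => S.sup fun l => walkWeight B (i :: l ++ [η])
  have le_x : ∀ i l, walkWeight B (i :: l ++ [η]) ≤ x i := fun i l => by
    obtain ⟨l', hnd, hle⟩ := exists_nodup_walkWeight_le B hclosed i η l
    have hl' : l' ∈ S := by simpa [S] using hnd.length_le_card
    exact hle.trans (Finset.le_sup (f := fun l => walkWeight B (i :: l ++ [η])) hl')
  have hxη : 0 ≤ x η := hC0 ▸ hL₀ ▸ le_x η L₀
  refine ⟨x, fun h => ?_, funext fun i => le_antisymm ?_ ?_⟩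
  · simp [h, zeroV] at hxη
  · refine Finset.sup_le fun j _ => ?_
    rw [RMax.add_finsetSup]
    exact Finset.sup_le fun l _ => le_x i (j :: l)
  · refine Finset.sup_le fun l _ => ?_
    rcases l with _ | ⟨j, l⟩
    · calc walkWeight B [i, η] = B i η + 0 := by simp
        _ ≤ B i η + x η := by gcongr
        _ ≤ mpMulVec B x i := Finset.le_sup (f := fun j => B i j + x j) (Finset.mem_univ η)
    · calc walkWeight B (i :: j :: l ++ [η]) = B i j + walkWeight B (j :: l ++ [η]) := rfl
        _ ≤ B i j + x j := by gcongr; exact le_x j l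
        _ ≤ mpMulVec B x i := Finset.le_sup (f := fun j => B i j + x j) (Finset.mem_univ j)

lemma IsMaxCycleMean.isEigen_coe {A : Matrix ι ι RMax} {μ : ℝ}
    (hρ : IsMaxCycleMean A (μ : RMax)) : IsEigen A μ := by
  obtain ⟨C, hC, -, hCw⟩ := hρ.2.resolve_right fun h => WithBot.coe_ne_bot h.1
  have hB : ∀ D : MultiCircuit ι, IsCircuit D →
      mcWeight (smulM ((-μ : ℝ) : RMax) A) D ≤ 0 := by
    intro D hD
    rw [mcWeight_smulM]
    by_cases hDA : InGraph A D
    · calc D.verts.card • ((-μ : ℝ) : RMax) + mcWeight A D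
          ≤ D.verts.card • ((-μ : ℝ) : RMax) + D.verts.card • (μ : RMax) := by
            gcongr; exact hρ.1 D hD hDA
        _ = 0 := by rw [← nsmul_add, add_comm, RMax.coe_add_coe_neg, nsmul_zero]
    · rw [mcWeight_eq_bot_iff.mpr hDA, WithBot.add_bot]
      exact bot_le
  obtain ⟨x, hx, hBx⟩ := exists_mpMulVec_eq_self _ hB hC
    (by rw [mcWeight_smulM, hCw, ← nsmul_add, add_comm, RMax.coe_add_coe_neg, nsmul_zero])
  refine ⟨x, hx, ?_⟩
  rw [mpMulVec_smulM] at hBx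
  funext i
  rw [smulV, ← congrFun hBx i, smulV, ← add_assoc, RMax.coe_add_coe_neg, zero_add]

lemma IsMaxCycleMean.isEigen_bot [Nonempty ι] {A : Matrix ι ι RMax}
    (hρ : IsMaxCycleMean A ⊥) : IsEigen A ⊥ := by
  have hA : ∀ C : MultiCircuit ι, IsCircuit C → ¬InGraph A C := by
    rcases hρ.2 with ⟨C, hC, hCA, hCw⟩ | ⟨-, hA⟩
    · rw [RMax.nsmul_bot (Finset.card_pos.mpr hC.1).ne', mcWeight_eq_bot_iff] at hCw
      exact absurd hCA hCw
    · exact hA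
  obtain ⟨j, hj⟩ := exists_forall_eq_bot_of_forall_not_inGraph hA
  exact isEigen_bot_of_forall_eq_bot hj

end Eigen


theorem maxCycleMean_is_max_eigenvalue {n : ℕ}
    (A : Matrix (Fin (n + 1)) (Fin (n + 1)) RMax) (ρ : RMax)
    (hρ : IsMaxCycleMean A ρ) :
    IsEigen A ρ ∧ ∀ l : RMax, IsEigen A l → l ≤ ρ := by
  refine ⟨?_, fun l hl => hρ.le_of_isEigen hl⟩
  induction ρ using WithBot.recBotCoe with
  | bot => exact hρ.isEigen_bot
  | coe μ => exact hρ.isEigen_coe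
end
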